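/- Let B be a binomial random variable with parameters (dv, v/n), where d, v, n are positive integers satisfying v/n ≤ ε/(2d) and v/n ≤ 1/2 for some ε > 0. Then P(B ≥ (1+ε)v) ≤ exp(−log((ε/(2d))·(n/v))·(1 + ε/2)·v). -/

import Mathlib

/-!
Exponential Markov: for `t ≥ 0`, `P(B ≥ a) ≤ e^{-ta} (1 - p + p e^t)^m` with `B ~ Bin(m, p)`.
Tilting to `e^t = q / p` turns the moment generating function into `(1 + (q - p))^m ≤ e^{(q - p) m}`,
and `q - p ≤ q log (q / p)` bounds this by `e^{t q m}`. With `p = v / n`, `q = ε / (2d)` and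
`m = dv` we get `q m = εv / 2`, so `P(B ≥ (1 + ε)v) ≤ e^{-t ((1 + ε)v - εv / 2)}`.
-/

open MeasureTheory Real ProbabilityTheory

set_option linter.deprecated false

namespace Real

lemma add_one_pow_le_exp_mul {x : ℝ} (hx : -1 ≤ x) (m : ℕ) : (x + 1) ^ m ≤ exp (x * m) := by
  rw [mul_comm, exp_nat_mul]
  exact pow_le_pow_left₀ (by linarith) (add_one_le_exp x) m

lemma sub_le_mul_log_div {p q : ℝ} (hp : 0 < p) (hq : 0 < q) : q - p ≤ q * log (q / p) := by
  have hlog : 1 - p / q ≤ log (q / p) := by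
    simpa only [inv_div] using one_sub_inv_le_log_of_pos (div_pos hq hp)
  calc q - p = q * (1 - p / q) := by field_simp
    _ ≤ q * log (q / p) := mul_le_mul_of_nonneg_left hlog hq.le

end Real

namespace PMF

lemma mgf_binomial (p : NNReal) (h : p ≤ 1) (m : ℕ) (t : ℝ) :
    mgf (fun k : Fin (m + 1) => (k : ℝ)) (binomial p h m).toMeasure t =
      (p * exp t + (1 - p)) ^ m := by
  rw [mgf, integral_eq_sum, add_pow, Finset.sum_fin_eq_sum_range]
  refine Finset.sum_congr rfl fun k hk => ?_
  rw [dif_pos (Finset.mem_range.mp hk), binomial_apply]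
  simp only [Fin.val_last, ENNReal.toReal_mul, ENNReal.toReal_pow, ENNReal.coe_toReal,
    ENNReal.toReal_sub_of_le (ENNReal.coe_le_one_iff.mpr h) ENNReal.one_ne_top,
    ENNReal.toReal_one, ENNReal.toReal_natCast, smul_eq_mul, mul_pow, ← exp_nat_mul]
  rw [mul_comm t]
  ring

lemma binomial_toMeasure_ge_le (p : NNReal) (h : p ≤ 1) (m : ℕ) (a : ℝ) {t : ℝ} (ht : 0 ≤ t) :
    (binomial p h m).toMeasure {k | a ≤ (k : ℝ)} ≤
      ENNReal.ofReal (exp (-t * a) * (p * exp t + (1 - p)) ^ m) := by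
  rw [← mgf_binomial _ h, ← ofReal_measureReal]
  exact ENNReal.ofReal_le_ofReal (measure_ge_le_exp_mul_mgf a ht .of_finite)

/-- At the tilt `exp t = q / p` the tilted success probability `p exp t` is `q`. -/
lemma binomial_toMeasure_ge_le_exp_log_div (p : NNReal) (h : p ≤ 1) (m : ℕ) (a : ℝ) {q : ℝ}
    (hp : 0 < p) (hpq : p ≤ q) :
    (binomial p h m).toMeasure {k | a ≤ (k : ℝ)} ≤
      ENNReal.ofReal (exp (-log (q / p) * (a - q * m))) := by
  have hp' : (0 : ℝ) < p := hp
  have hq : 0 < q := hp'.trans_le hpq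
  have htilt : p * exp (log (q / p)) = q := by
    rw [exp_log (div_pos hq hp')]
    field_simp
  refine (binomial_toMeasure_ge_le p h m a (log_nonneg ((one_le_div hp').mpr hpq))).trans ?_
  gcongr
  calc exp (-log (q / p) * a) * (p * exp (log (q / p)) + (1 - p)) ^ m
      = exp (-log (q / p) * a) * ((q - p) + 1) ^ m := by rw [htilt]; ring_nf
    _ ≤ exp (-log (q / p) * a) * exp ((q - p) * m) := by
      gcongr
      exact add_one_pow_le_exp_mul (by linarith [NNReal.coe_le_one.mpr h]) m
    _ ≤ exp (-log (q / p) * a) * exp (q * log (q / p) * m) := by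
      gcongr
      exact sub_le_mul_log_div hp' hq
    _ = exp (-log (q / p) * (a - q * m)) := by
      rw [← exp_add]
      ring_nf

end PMF

theorem binomial_tail_bound_eps_general {d v n : ℕ} (hd : 0 < d) (hv : 0 < v) (hn : 0 < n)
    (ε : ℝ)
    (h1 : (v : ℝ) / n ≤ ε / (2 * d))
    (h : ENNReal.ofReal ((v : ℝ) / n) ≤ 1) :
    (PMF.binomial (Real.toNNReal ((v : ℝ) / n)) (ENNReal.coe_le_one_iff.mp h) (d * v)).toMeasure
        {k : Fin (d * v + 1) | (1 + ε) * v ≤ (k : ℝ)} ≤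
      ENNReal.ofReal (exp (-(Real.log (ε / (2 * d) * (n / v)) * (1 + ε / 2) * v))) := by
  have hp : 0 < (v : ℝ) / n := by positivity
  have hcoe : ((Real.toNNReal ((v : ℝ) / n) : NNReal) : ℝ) = v / n := Real.coe_toNNReal _ hp.le
  have tail := PMF.binomial_toMeasure_ge_le_exp_log_div _ (ENNReal.coe_le_one_iff.mp h) (d * v)
    ((1 + ε) * v) (q := ε / (2 * d)) (Real.toNNReal_pos.mpr hp) (by rwa [hcoe])
  rw [hcoe, div_div_eq_mul_div, mul_div_assoc] at tail
  refine tail.trans_eq (congrArg _ (congrArg _ ?_))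
  push_cast
  field_simp
  ring

/-- Tail bound for `B ~ Binomial(dv, v/n)` when `v/n ≤ ε/(2d)` and `v/n ≤ 1/2`:
`P(B ≥ (1+ε)v) ≤ exp (−log((ε/(2d))(n/v)) (1 + ε/2) v)`. -/
theorem binomial_tail_bound_eps {d v n : ℕ} (hd : 0 < d) (hv : 0 < v) (hn : 0 < n)
    (ε : ℝ) (hε : 0 < ε)
    (h1 : (v : ℝ) / n ≤ ε / (2 * d)) (h2 : (v : ℝ) / n ≤ 1 / 2)
    (h : ENNReal.ofReal ((v : ℝ) / n) ≤ 1) :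
    (PMF.binomial (Real.toNNReal ((v : ℝ) / n)) (ENNReal.coe_le_one_iff.mp h) (d * v)).toMeasure
        {k : Fin (d * v + 1) | (1 + ε) * v ≤ (k : ℝ)} ≤
      ENNReal.ofReal (exp (-(Real.log (ε / (2 * d) * (n / v)) * (1 + ε / 2) * v))) :=
  binomial_tail_bound_eps_general hd hv hn ε h1 h
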